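/- Let F : X → H be a continuous frame for a separable complex Hilbert space H with respect to a measure space (X, μ) with σ-finite positive measure. A map G : X → H is a dual frame of F if and only if G(x) = S_F^{-1}F(x) + Θ(x) for μ-a.e. x, where Θ : X → H is a Bessel mapping with respect to (X, μ) whose synthesis operator satisfies range(T_Θ^*) ⊆ ker(T_F). -/

import Mathlib

/-!
In terms of synthesis operators, `G` is a dual of `F` exactly when `T_G T_F^* = 1`; the lower
frame bound of `G` is then automatic, since `T_F` is a left inverse of the analysis operator
`T_G^*`. Synthesis operators are additive and `L ∘ F` has synthesis operator `L T_F`, so for a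
dual `G` the map `Θ = G - S_F⁻¹ F` has synthesis operator `T_Θ = T_G - S_F⁻¹ T_F`, and
`T_Θ T_F^* = 1 - S_F⁻¹ S_F = 0`; taking adjoints, this is `range T_Θ^* ⊆ ker T_F`. Conversely,
`T_G = S_F⁻¹ T_F + T_Θ` gives `T_G T_F^* = 1 + 0`.
-/


open MeasureTheory ENNReal

noncomputable section

namespace ContFrame

variable {X : Type*} {H : Type*}

/-- The paper's inner product `⟨f, g⟩`: linear in the first argument and
conjugate-linear in the second (Mathlib's `inner` is conjugate-linear in the first). -/
def pinner [NormedAddCommGroup H] [InnerProductSpace ℂ H] (f g : H) : ℂ :=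
  @inner ℂ _ _ g f

/-- `∫_X |⟨f, F x⟩|² dμ(x)`, as a lower integral. -/
def frameInt [MeasurableSpace X] [NormedAddCommGroup H] [InnerProductSpace ℂ H]
    (μ : Measure X) (F : X → H) (f : H) : ℝ≥0∞ :=
  ∫⁻ x, (‖pinner f (F x)‖₊ : ℝ≥0∞) ^ 2 ∂μ

/-- `F` is weakly measurable: `x ↦ ⟨f, F x⟩` is μ-measurable for every `f`. -/
def WeaklyMeasurable [MeasurableSpace X] [NormedAddCommGroup H] [InnerProductSpace ℂ H]
    (μ : Measure X) (F : X → H) : Prop :=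
  ∀ f : H, AEMeasurable (fun x => pinner f (F x)) μ

/-- `F` is a Bessel mapping for `H` w.r.t. `(X, μ)` with Bessel bound `B < ∞`. -/
def IsBesselMapping [MeasurableSpace X] [NormedAddCommGroup H] [InnerProductSpace ℂ H]
    (μ : Measure X) (F : X → H) (B : ℝ≥0∞) : Prop :=
  B < ⊤ ∧ WeaklyMeasurable μ F ∧
    ∀ f : H, frameInt μ F f ≤ B * (‖f‖₊ : ℝ≥0∞) ^ 2

/-- `F` is a continuous frame for `H` w.r.t. `(X, μ)` with frame bounds `0 < A ≤ B < ∞`: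
`A ‖f‖² ≤ ∫_X |⟨f, F x⟩|² dμ(x) ≤ B ‖f‖²` for all `f ∈ H`. -/
def IsContinuousFrame [MeasurableSpace X] [NormedAddCommGroup H] [InnerProductSpace ℂ H]
    (μ : Measure X) (F : X → H) (A B : ℝ≥0∞) : Prop :=
  0 < A ∧ A ≤ B ∧ B < ⊤ ∧ WeaklyMeasurable μ F ∧
    ∀ f : H, A * (‖f‖₊ : ℝ≥0∞) ^ 2 ≤ frameInt μ F f ∧
      frameInt μ F f ≤ B * (‖f‖₊ : ℝ≥0∞) ^ 2

/-- A realization of the Hilbert tensor product `H = H₁ ⊗ H₂`: a bilinear map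
`tmul` whose simple tensors satisfy `⟪a⊗b, c⊗d⟫ = ⟪a,c⟫⟪b,d⟫` and span a dense subspace. -/
structure HilbertTensorProduct (H₁ H₂ H : Type*)
    [NormedAddCommGroup H₁] [InnerProductSpace ℂ H₁]
    [NormedAddCommGroup H₂] [InnerProductSpace ℂ H₂]
    [NormedAddCommGroup H] [InnerProductSpace ℂ H] where
  tmul : H₁ →ₗ[ℂ] H₂ →ₗ[ℂ] H
  inner_tmul : ∀ (a c : H₁) (b d : H₂),
    (inner ℂ (tmul a b) (tmul c d) : ℂ) = (inner ℂ a c : ℂ) * (inner ℂ b d : ℂ)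
  dense_span : Dense (↑(Submodule.span ℂ {z : H | ∃ a b, z = tmul a b}) : Set H)

/-- `T : L²(X,μ) → H` is the synthesis operator of `F`, characterized by the fact
that its adjoint is the analysis operator `(T^* f)(x) = ⟨f, F x⟩`. -/
def IsSynthesisOperator {X H : Type*} [MeasurableSpace X]
    [NormedAddCommGroup H] [InnerProductSpace ℂ H] [CompleteSpace H]
    (μ : Measure X) (F : X → H) (T : Lp ℂ 2 μ →L[ℂ] H) : Prop :=
  ∀ f : H, (ContinuousLinearMap.adjoint T f : X → ℂ) =ᵐ[μ] fun x => pinner f (F x)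

/-- `G` is a dual frame of the continuous frame `F`:
`⟨f, g⟩ = ∫_X ⟨f, F x⟩ ⟨G x, g⟩ dμ(x)` for all `f, g ∈ H`. -/
def IsDualFrame {X H : Type*} [MeasurableSpace X]
    [NormedAddCommGroup H] [InnerProductSpace ℂ H]
    (μ : Measure X) (F G : X → H) : Prop :=
  (∃ A B, IsContinuousFrame μ G A B) ∧
    ∀ f g : H, pinner f g = ∫ x, pinner f (F x) * pinner (G x) g ∂μ

/-- A subspace `S` of `L²(X, μ)` is a reproducing kernel Hilbert subspace: there is a
kernel map `k : X → L²` with values in `S` such that every `f ∈ S` is represented by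
the function `x ↦ ⟨f, k_x⟩` (in particular, evaluations are bounded on `S`). -/
def IsRKHS {X : Type*} [MeasurableSpace X] (μ : Measure X)
    (S : Submodule ℂ (Lp ℂ 2 μ)) : Prop :=
  ∃ k : X → Lp ℂ 2 μ, (∀ x, k x ∈ S) ∧
    ∀ f ∈ S, (f : X → ℂ) =ᵐ[μ] fun x => pinner f (k x)

open ContinuousLinearMap

theorem _root_.MeasureTheory.eLpNorm_two_sq {α E : Type*} [NormedAddCommGroup E]
    [MeasurableSpace α] {μ : Measure α} (g : α → E) :
    eLpNorm g 2 μ ^ 2 = ∫⁻ x, ‖g x‖ₑ ^ 2 ∂μ := by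
  simpa only [NNReal.coe_ofNat, ENNReal.rpow_two, ENNReal.coe_ofNat] using
    eLpNorm_nnreal_pow_eq_lintegral (f := g) (μ := μ) (p := 2) two_ne_zero

theorem _root_.ContinuousLinearMap.range_adjoint_le_ker_iff {𝕜 E E' : Type*} [RCLike 𝕜]
    [NormedAddCommGroup E] [InnerProductSpace 𝕜 E] [CompleteSpace E]
    [NormedAddCommGroup E'] [InnerProductSpace 𝕜 E'] [CompleteSpace E'] (S T : E →L[𝕜] E') :
    LinearMap.range (adjoint S : E' →ₗ[𝕜] E) ≤ LinearMap.ker (T : E →ₗ[𝕜] E') ↔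
      S.comp (adjoint T) = 0 := by
  rw [LinearMap.range_le_ker_iff, ← toLinearMap_comp, ← toLinearMap_zero,
    ContinuousLinearMap.coe_inj,
    ← (adjoint : (E' →L[𝕜] E') ≃ₗᵢ⋆[𝕜] (E' →L[𝕜] E')).map_eq_zero_iff, adjoint_comp,
    adjoint_adjoint]

section Frames

variable [MeasurableSpace X] {μ : Measure X} [NormedAddCommGroup H] [InnerProductSpace ℂ H]
  {F G : X → H} {A B : ℝ≥0∞}

theorem frameInt_eq_eLpNorm_sq (F : X → H) (f : H) :
    frameInt μ F f = eLpNorm (fun x => pinner f (F x)) 2 μ ^ 2 := by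
  simp only [frameInt, eLpNorm_two_sq, enorm_eq_nnnorm]

theorem IsContinuousFrame.isBesselMapping (hF : IsContinuousFrame μ F A B) :
    IsBesselMapping μ F B :=
  ⟨hF.2.2.1, hF.2.2.2.1, fun f => (hF.2.2.2.2 f).2⟩

namespace IsBesselMapping

theorem memLp_pinner (hF : IsBesselMapping μ F B) (f : H) :
    MemLp (fun x => pinner f (F x)) 2 μ := by
  refine ⟨(hF.2.1 f).aestronglyMeasurable, ?_⟩
  have h := (hF.2.2 f).trans_lt (mul_lt_top hF.1 (pow_lt_top coe_lt_top))
  rw [frameInt_eq_eLpNorm_sq] at h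
  simpa using h

theorem norm_toLp_pinner_le (hF : IsBesselMapping μ F B) (f : H) :
    ‖(hF.memLp_pinner f).toLp _‖ ≤ √B.toReal * ‖f‖ := by
  have h : ‖(hF.memLp_pinner f).toLp _‖ₑ ^ 2 ≤ B * ‖f‖ₑ ^ 2 := by
    rw [Lp.enorm_toLp, ← frameInt_eq_eLpNorm_sq]
    simpa only [enorm_eq_nnnorm] using hF.2.2 f
  have hr := ENNReal.toReal_mono (mul_ne_top hF.1.ne (pow_ne_top enorm_ne_top)) h
  simp only [toReal_pow, toReal_mul, toReal_enorm] at hr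
  rwa [← pow_le_pow_iff_left₀ (norm_nonneg _) (by positivity) two_ne_zero, mul_pow,
    Real.sq_sqrt toReal_nonneg]

def analysisOperator (hF : IsBesselMapping μ F B) : H →L[ℂ] Lp ℂ 2 μ :=
  LinearMap.mkContinuous
    { toFun := fun f => (hF.memLp_pinner f).toLp _
      map_add' := fun f g => by
        rw [← MemLp.toLp_add]
        exact MemLp.toLp_congr _ _ (.of_forall fun x => by simp [pinner])
      map_smul' := fun c f => by
        rw [RingHom.id_apply, ← MemLp.toLp_const_smul]
        exact MemLp.toLp_congr _ _ (.of_forall fun x => by simp [pinner]) }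
    √B.toReal hF.norm_toLp_pinner_le

theorem isContinuousFrame (hF : IsBesselMapping μ F B) (hA : 0 < A)
    (hlow : ∀ f, A * ‖f‖ₑ ^ 2 ≤ frameInt μ F f) :
    IsContinuousFrame μ F (A ⊓ 1) (B ⊔ 1) :=
  ⟨lt_min hA one_pos, inf_le_right.trans le_sup_right, max_lt hF.1 one_lt_top, hF.2.1,
    fun f => ⟨(mul_le_mul_left inf_le_left _).trans (hlow f),
      (hF.2.2 f).trans (mul_le_mul_left le_sup_left _)⟩⟩

end IsBesselMapping

variable [CompleteSpace H] {T TF TG : Lp ℂ 2 μ →L[ℂ] H}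

theorem IsBesselMapping.isSynthesisOperator (hF : IsBesselMapping μ F B) :
    IsSynthesisOperator μ F (adjoint hF.analysisOperator) := fun f => by
  rw [adjoint_adjoint]
  exact (hF.memLp_pinner f).coeFn_toLp

namespace IsSynthesisOperator

theorem frameInt_eq (hT : IsSynthesisOperator μ F T) (f : H) :
    frameInt μ F f = ‖adjoint T f‖ₑ ^ 2 := by
  rw [frameInt_eq_eLpNorm_sq, Lp.enorm_def, eLpNorm_congr_ae (hT f)]

theorem weaklyMeasurable (hT : IsSynthesisOperator μ F T) : WeaklyMeasurable μ F :=
  fun f => (Lp.aestronglyMeasurable (adjoint T f)).aemeasurable.congr (hT f)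

theorem isBesselMapping (hT : IsSynthesisOperator μ F T) :
    IsBesselMapping μ F (‖adjoint T‖ₑ ^ 2) := by
  refine ⟨pow_lt_top enorm_lt_top, hT.weaklyMeasurable, fun f => ?_⟩
  rw [hT.frameInt_eq, ← mul_pow]
  exact pow_le_pow_left' ((adjoint T).le_opENorm f) 2

theorem congr_ae (hT : IsSynthesisOperator μ F T) (hFG : F =ᵐ[μ] G) :
    IsSynthesisOperator μ G T := fun f =>
  (hT f).trans (hFG.mono fun x hx => by simp only [hx])

theorem add {T' : Lp ℂ 2 μ →L[ℂ] H} (hT : IsSynthesisOperator μ F T)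
    (hT' : IsSynthesisOperator μ G T') : IsSynthesisOperator μ (F + G) (T + T') := by
  intro f
  filter_upwards [Lp.coeFn_add (adjoint T f) (adjoint T' f), hT f, hT' f] with x hx h h'
  rw [map_add, add_apply, hx, Pi.add_apply, h, h']
  simp only [pinner, Pi.add_apply, inner_add_left]

theorem sub {T' : Lp ℂ 2 μ →L[ℂ] H} (hT : IsSynthesisOperator μ F T)
    (hT' : IsSynthesisOperator μ G T') : IsSynthesisOperator μ (F - G) (T - T') := by
  intro f
  filter_upwards [Lp.coeFn_sub (adjoint T f) (adjoint T' f), hT f, hT' f] with x hx h h'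
  rw [map_sub, sub_apply, hx, Pi.sub_apply, h, h']
  simp only [pinner, Pi.sub_apply, inner_sub_left]

theorem mapL {H' : Type*} [NormedAddCommGroup H'] [InnerProductSpace ℂ H'] [CompleteSpace H']
    (hT : IsSynthesisOperator μ F T) (L : H →L[ℂ] H') :
    IsSynthesisOperator μ (fun x => L (F x)) (L.comp T) := by
  intro f
  filter_upwards [hT (adjoint L f)] with x hx
  rw [adjoint_comp, comp_apply, hx, pinner, pinner, adjoint_inner_right]

theorem integral_pinner_mul_pinner (hTF : IsSynthesisOperator μ F TF)
    (hTG : IsSynthesisOperator μ G TG) (f g : H) :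
    ∫ x, pinner f (F x) * pinner (G x) g ∂μ = pinner (TG (adjoint TF f)) g := by
  rw [pinner, ← adjoint_inner_left, L2.inner_def]
  refine integral_congr_ae ?_
  filter_upwards [hTG g, hTF f] with x hG hF
  simp only [hG, hF, RCLike.inner_apply, pinner, inner_conj_symm]

theorem le_frameInt_of_comp_adjoint_eq_id (hT : IsSynthesisOperator μ F T)
    {L : Lp ℂ 2 μ →L[ℂ] H} (hL : L.comp (adjoint T) = ContinuousLinearMap.id ℂ H) (f : H) :
    (‖L‖ₑ ^ 2)⁻¹ * ‖f‖ₑ ^ 2 ≤ frameInt μ F f := by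
  have hf : ‖f‖ₑ ≤ ‖L‖ₑ * ‖adjoint T f‖ₑ := by
    simpa only [← comp_apply, hL, id_apply] using L.le_opENorm (adjoint T f)
  rw [hT.frameInt_eq, mul_comm, ← div_eq_mul_inv]
  exact ENNReal.div_le_of_le_mul' (by simpa only [mul_pow] using pow_le_pow_left' hf 2)

theorem exists_isContinuousFrame (hT : IsSynthesisOperator μ F T)
    {L : Lp ℂ 2 μ →L[ℂ] H} (hL : L.comp (adjoint T) = ContinuousLinearMap.id ℂ H) :
    ∃ A B, IsContinuousFrame μ F A B :=
  ⟨_, _, hT.isBesselMapping.isContinuousFrame (ENNReal.inv_pos.2 (pow_ne_top enorm_ne_top))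
    (hT.le_frameInt_of_comp_adjoint_eq_id hL)⟩

end IsSynthesisOperator

theorem isDualFrame_iff_comp_adjoint_eq_id (hTF : IsSynthesisOperator μ F TF)
    (hTG : IsSynthesisOperator μ G TG) :
    IsDualFrame μ F G ↔ TG.comp (adjoint TF) = ContinuousLinearMap.id ℂ H := by
  simp only [IsDualFrame, hTF.integral_pinner_mul_pinner hTG]
  refine ⟨fun h => ext fun f => ext_inner_left ℂ fun g => (h.2 f g).symm, fun h => ⟨?_, ?_⟩⟩
  · refine hTG.exists_isContinuousFrame (L := TF) ?_
    simpa only [adjoint_comp, adjoint_adjoint, adjoint_id] using congrArg adjoint h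
  · intro f g
    rw [← comp_apply, h, id_apply]

end Frames

theorem dual_frames_characterization'_general
    {X H : Type*} [MeasurableSpace X]
    [NormedAddCommGroup H] [InnerProductSpace ℂ H] [CompleteSpace H]
    (μ : Measure X)
    (F : X → H)
    (TF : Lp ℂ 2 μ →L[ℂ] H) (hTF : IsSynthesisOperator μ F TF)
    -- `SFinv` is the inverse of the frame operator `S_F = T_F T_F^*`
    (SFinv : H →L[ℂ] H)
    (hSFinv₁ : SFinv.comp (TF.comp (ContinuousLinearMap.adjoint TF))
      = ContinuousLinearMap.id ℂ H)
    (G : X → H) :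
    IsDualFrame μ F G ↔
      ∃ (Θ : X → H) (BΘ : ℝ≥0∞) (TΘ : Lp ℂ 2 μ →L[ℂ] H),
        IsBesselMapping μ Θ BΘ ∧ IsSynthesisOperator μ Θ TΘ ∧
        LinearMap.range (ContinuousLinearMap.adjoint TΘ : H →ₗ[ℂ] Lp ℂ 2 μ) ≤ LinearMap.ker (TF : Lp ℂ 2 μ →ₗ[ℂ] H) ∧
        ∀ᵐ x ∂μ, G x = SFinv (F x) + Θ x := by
  have hTSF := hTF.mapL SFinv
  constructor
  · intro hG
    obtain ⟨_, _, hGframe⟩ := hG.1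
    have hTG := hGframe.isBesselMapping.isSynthesisOperator
    refine ⟨G - fun x => SFinv (F x), _, _, (hTG.sub hTSF).isBesselMapping, hTG.sub hTSF, ?_,
      .of_forall fun x => by simp⟩
    rw [range_adjoint_le_ker_iff, sub_comp, comp_assoc, hSFinv₁,
      (isDualFrame_iff_comp_adjoint_eq_id hTF hTG).1 hG, sub_self]
  · rintro ⟨Θ, -, TΘ, -, hTΘ, hrange, hG⟩
    have hTG := (hTSF.add hTΘ).congr_ae (hG.mono fun x hx => hx.symm)
    rw [isDualFrame_iff_comp_adjoint_eq_id hTF hTG, add_comp, comp_assoc, hSFinv₁,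
      (range_adjoint_le_ker_iff _ _).1 hrange, add_zero]

/-- The dual frames of a continuous frame `F` are precisely the maps
`G(x) = S_F^{-1}F(x) + Θ(x)` where `Θ` is a Bessel mapping whose analysis operator
satisfies `range T_Θ^* ⊆ ker T_F`. -/
theorem dual_frames_characterization'
    {X H : Type*} [MeasurableSpace X]
    [NormedAddCommGroup H] [InnerProductSpace ℂ H] [CompleteSpace H]
      [TopologicalSpace.SeparableSpace H]
    (μ : Measure X) [SigmaFinite μ]
    (F : X → H) (A B : ℝ≥0∞) (hF : IsContinuousFrame μ F A B)
    (TF : Lp ℂ 2 μ →L[ℂ] H) (hTF : IsSynthesisOperator μ F TF)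
    -- `SFinv` is the inverse of the frame operator `S_F = T_F T_F^*`
    (SFinv : H →L[ℂ] H)
    (hSFinv₁ : SFinv.comp (TF.comp (ContinuousLinearMap.adjoint TF))
      = ContinuousLinearMap.id ℂ H)
    (hSFinv₂ : (TF.comp (ContinuousLinearMap.adjoint TF)).comp SFinv
      = ContinuousLinearMap.id ℂ H)
    (G : X → H) :
    IsDualFrame μ F G ↔
      ∃ (Θ : X → H) (BΘ : ℝ≥0∞) (TΘ : Lp ℂ 2 μ →L[ℂ] H),
        IsBesselMapping μ Θ BΘ ∧ IsSynthesisOperator μ Θ TΘ ∧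
        LinearMap.range (ContinuousLinearMap.adjoint TΘ : H →ₗ[ℂ] Lp ℂ 2 μ) ≤ LinearMap.ker (TF : Lp ℂ 2 μ →ₗ[ℂ] H) ∧
        ∀ᵐ x ∂μ, G x = SFinv (F x) + Θ x :=
  dual_frames_characterization'_general μ F TF hTF SFinv hSFinv₁ G

end ContFrame
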